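/- arXiv:1404.7055 — 2 statements merged into one kernel-verified Lean document; each statement's English description precedes it below -/
import Mathlib

section
/- Let μ > 0, f > 0, and let 0 ≤ τ_AB and τ_AC = τ_AB + s with s ≥ f. Let Z ~ Exp(1) and define p(τ) = E[(3/4)(1 - e^{-(4/3)(μτ + 2μZ)})]. Then p(τ_AC) - p(τ_AB) ≥ (3 e^{-(4/3)μ τ_AC} μ f)/(8μ + 3). -/
open MeasureTheory Real

/-!
Against the `Exp(1)` density the expectation is explicit,
`p(τ) = 3/4 - (9/4) e^{-(4/3)μτ} / (8μ + 3)`, so the gap is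
`(9/4) (e^{-(4/3)μτ_AB} - e^{-(4/3)μτ_AC}) / (8μ + 3)`, and `e^{x+d} - e^x ≥ e^x d`
with `x = -(4/3)μτ_AC`, `d = (4/3)μs ≥ (4/3)μf` bounds it below.
-/

theorem Real.exp_mul_le_exp_add_sub_exp (x d : ℝ) : exp x * d ≤ exp (x + d) - exp x := by
  rw [exp_add]
  nlinarith [add_one_le_exp d, exp_pos x]

theorem integral_Ici_zero_exp_mul {a : ℝ} (ha : a < 0) :
    ∫ z in Set.Ici (0 : ℝ), exp (a * z) = -1 / a := by
  rw [integral_Ici_eq_integral_Ioi, integral_exp_mul_Ioi ha, mul_zero, exp_zero]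

theorem integral_Ici_jukesCantor_mul_exp_neg (μ τ : ℝ) (hμ : 0 < 8 * μ + 3) :
    (∫ z in Set.Ici (0 : ℝ),
        (3 / 4) * (1 - exp (-(4 / 3) * (μ * τ + 2 * μ * z))) * exp (-z)) =
      3 / 4 - 9 / 4 * exp (-(4 / 3) * μ * τ) / (8 * μ + 3) := by
  have ha : -(8 * μ + 3) / 3 < 0 := by linarith
  have integrand : ∀ z : ℝ,
      (3 / 4) * (1 - exp (-(4 / 3) * (μ * τ + 2 * μ * z))) * exp (-z) =
        3 / 4 * exp (-1 * z) - 3 / 4 * exp (-(4 / 3) * μ * τ) * exp (-(8 * μ + 3) / 3 * z) := by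
    intro z
    rw [mul_sub, mul_one, sub_mul, mul_assoc, ← exp_add, mul_assoc (3 / 4 : ℝ), ← exp_add]
    ring_nf
  simp_rw [integrand]
  rw [integral_sub, integral_const_mul, integral_const_mul, integral_Ici_zero_exp_mul (by norm_num),
    integral_Ici_zero_exp_mul ha]
  · field_simp
    ring
  · exact ((integrableOn_Ici_iff_integrableOn_Ioi).mpr
      (integrableOn_exp_mul_Ioi (by norm_num) 0)).const_mul _
  · exact ((integrableOn_Ici_iff_integrableOn_Ioi).mpr (integrableOn_exp_mul_Ioi ha 0)).const_mul _

theorem clock_gap_estimate_general (μ f τAB s : ℝ) (hμ : 0 < μ)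
    (hs : f ≤ s) :
    (∫ z in Set.Ici (0 : ℝ),
        (3 / 4) * (1 - Real.exp (-(4 / 3) * (μ * (τAB + s) + 2 * μ * z))) * Real.exp (-z)) -
      (∫ z in Set.Ici (0 : ℝ),
        (3 / 4) * (1 - Real.exp (-(4 / 3) * (μ * τAB + 2 * μ * z))) * Real.exp (-z)) ≥
      3 * Real.exp (-(4 / 3) * μ * (τAB + s)) * μ * f / (8 * μ + 3) := by
  have hden : 0 < 8 * μ + 3 := by linarith
  rw [integral_Ici_jukesCantor_mul_exp_neg μ _ hden, integral_Ici_jukesCantor_mul_exp_neg μ _ hden]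
  set e := exp (-(4 / 3) * μ * (τAB + s))
  have hgap : e * (4 / 3 * μ * s) ≤ exp (-(4 / 3) * μ * τAB) - e := by
    convert exp_mul_le_exp_add_sub_exp (-(4 / 3) * μ * (τAB + s)) (4 / 3 * μ * s) using 3
    ring
  have hsf : e * (μ * f) ≤ e * (μ * s) :=
    mul_le_mul_of_nonneg_left (mul_le_mul_of_nonneg_left hs hμ.le) (exp_pos _).le
  rw [ge_iff_le, ← sub_nonneg]
  have key : 0 ≤ (9 / 4 * (exp (-(4 / 3) * μ * τAB) - e) - 3 * e * μ * f) / (8 * μ + 3) :=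
    div_nonneg (by nlinarith) hden.le
  convert key using 1
  ring

/-- Key gap estimate (Theorem 1): with `Z ~ Exp(1)` and
`p(τ) = E[(3/4)(1 - e^{-(4/3)(μτ + 2μZ)})]`, if `τ_AC = τ_AB + s` with `s ≥ f > 0`, then
`p(τ_AC) - p(τ_AB) ≥ 3 e^{-(4/3)μτ_AC} μ f / (8μ + 3)`. -/
theorem clock_gap_estimate (μ f τAB s : ℝ) (hμ : 0 < μ) (hf : 0 < f)
    (hτ : 0 ≤ τAB) (hs : f ≤ s) :
    (∫ z in Set.Ici (0 : ℝ),
        (3 / 4) * (1 - Real.exp (-(4 / 3) * (μ * (τAB + s) + 2 * μ * z))) * Real.exp (-z)) -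
      (∫ z in Set.Ici (0 : ℝ),
        (3 / 4) * (1 - Real.exp (-(4 / 3) * (μ * τAB + 2 * μ * z))) * Real.exp (-z)) ≥
      3 * Real.exp (-(4 / 3) * μ * (τAB + s)) * μ * f / (8 * μ + 3) :=
  clock_gap_estimate_general μ f τAB s hμ hs
end

section
/- Let μ_{AB}, μ_{CD}, μ_{o1o3}, μ_{o2o3}, μ_{AC}, μ_{BD} be nonnegative reals with μ_{AB} + μ_{CD} + 2μ_{o1o3} + 2μ_{o2o3} = μ_{AC} + μ_{BD}. Let Z be a nonnegative random variable with E[e^{-(8/3)Z}] ≤ 1/((8/3)μ_L+1) for some μ_L > 0, and let q_1, q_2 ∈ [0,1]. Then (e^{-(4/3)(μ_{AB}+2μ_{o1o3})}(q_1 + E[e^{-(8/3)Z}](1-q_1)) · e^{-(4/3)(μ_{CD}+2μ_{o2o3})}(q_2 + E[e^{-(8/3)Z}](1-q_2))) / (e^{-(4/3)μ_{AC}} E[e^{-(8/3)Z}] · e^{-(4/3)μ_{BD}} E[e^{-(8/3)Z}]) ≥ ((8/3)μ_L q_1 + 1)((8/3)μ_L q_2 + 1). -/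
open MeasureTheory Real

/-!
Writing `I = E[e^{-(8/3)Z}]`, which is positive since its integrand is positive and bounded by `1`,
and `c = (8/3)μ_L`, the hypothesis says `(c + 1) I ≤ 1`, hence
`q + I (1 - q) - (c q + 1) I = q (1 - (c + 1) I) ≥ 0`, i.e. each factor `(q + I (1 - q)) / I` is at
least `c q + 1`. The exponential prefactors cancel because the exponents have the same sum.
-/

lemma integral_exp_neg_mul_pos {Ω : Type*} [MeasurableSpace Ω] {ℙ : Measure Ω}
    [IsFiniteMeasure ℙ] [NeZero ℙ] {Z : Ω → ℝ} (hZ : AEMeasurable Z ℙ) (hZnn : ∀ ω, 0 ≤ Z ω)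
    {a : ℝ} (ha : 0 ≤ a) :
    0 < ∫ ω, exp (-a * Z ω) ∂ℙ := by
  refine integral_exp_pos ((integrable_const (1 : ℝ)).mono'
    ((hZ.const_mul (-a)).exp).aestronglyMeasurable (ae_of_all _ fun ω => ?_))
  rw [norm_eq_abs, abs_exp, exp_le_one_iff, neg_mul]
  exact neg_nonpos.mpr (mul_nonneg ha (hZnn ω))

lemma add_one_le_mix_div {c I q : ℝ} (hI : 0 < I) (hIle : I ≤ 1 / (c + 1)) (hq : 0 ≤ q) :
    c * q + 1 ≤ (q + I * (1 - q)) / I := by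
  have hcI : I * (c + 1) ≤ 1 := (le_div_iff₀ (one_div_pos.mp (hI.trans_le hIle))).mp hIle
  rw [le_div_iff₀ hI]
  linear_combination mul_nonneg hq (sub_nonneg.mpr hcI)

lemma mul_add_one_le_mix_div_mul {c I q₁ q₂ : ℝ} (hI : 0 < I) (hIle : I ≤ 1 / (c + 1))
    (hq₁ : q₁ ∈ Set.Icc (0 : ℝ) 1) (hq₂ : q₂ ∈ Set.Icc (0 : ℝ) 1) :
    (c * q₁ + 1) * (c * q₂ + 1) ≤ (q₁ + I * (1 - q₁)) / I * ((q₂ + I * (1 - q₂)) / I) := by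
  have hc : 0 < c + 1 := one_div_pos.mp (hI.trans_le hIle)
  have h₁ := add_one_le_mix_div hI hIle hq₁.1
  have hc₁ : 0 ≤ c * q₁ + 1 := by nlinarith [hq₁.1, hq₁.2]
  have hc₂ : 0 ≤ c * q₂ + 1 := by nlinarith [hq₂.1, hq₂.2]
  exact mul_le_mul h₁ (add_one_le_mix_div hI hIle hq₂.1) hc₂ (hc₁.trans h₁)

theorem four_point_ratio_bound_general {Ω : Type*} [MeasurableSpace Ω]
    (ℙ : Measure Ω) [IsProbabilityMeasure ℙ]
    (Z : Ω → ℝ) (hZ : Measurable Z) (hZnn : ∀ ω, 0 ≤ Z ω)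
    (μAB μCD μ13 μ23 μAC μBD μL q1 q2 I : ℝ)
    (hsum : μAB + μCD + 2 * μ13 + 2 * μ23 = μAC + μBD)
    (hI : I = ∫ ω, Real.exp (-(8 / 3) * Z ω) ∂ℙ)
    (hIle : I ≤ 1 / ((8 / 3) * μL + 1))
    (hq1 : q1 ∈ Set.Icc (0 : ℝ) 1) (hq2 : q2 ∈ Set.Icc (0 : ℝ) 1) :
    ((8 / 3) * μL * q1 + 1) * ((8 / 3) * μL * q2 + 1) ≤
      (Real.exp (-(4 / 3) * (μAB + 2 * μ13)) * (q1 + I * (1 - q1)) *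
        (Real.exp (-(4 / 3) * (μCD + 2 * μ23)) * (q2 + I * (1 - q2)))) /
      (Real.exp (-(4 / 3) * μAC) * I * (Real.exp (-(4 / 3) * μBD) * I)) := by
  have hIpos : 0 < I := hI ▸ integral_exp_neg_mul_pos hZ.aemeasurable hZnn (by norm_num)
  have hexp : exp (-(4 / 3) * (μAB + 2 * μ13)) * exp (-(4 / 3) * (μCD + 2 * μ23)) =
      exp (-(4 / 3) * μAC) * exp (-(4 / 3) * μBD) := by
    rw [← exp_add, ← exp_add]
    congr 1
    linear_combination (-(4 / 3) : ℝ) * hsum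
  calc ((8 / 3) * μL * q1 + 1) * ((8 / 3) * μL * q2 + 1)
      ≤ (q1 + I * (1 - q1)) / I * ((q2 + I * (1 - q2)) / I) :=
        mul_add_one_le_mix_div_mul hIpos hIle hq1 hq2
    _ = _ := by
        rw [div_mul_div_comm, div_eq_div_iff (by positivity) (by positivity)]
        linear_combination -(q1 + I * (1 - q1)) * (q2 + I * (1 - q2)) * I ^ 2 * hexp

/-- Algebraic core of Case (a) of Theorem 3 (four-point inequality for METAL).
With `I = E[e^{-(8/3)Z}] ≤ 1/((8/3)μ_L+1)`, `q₁, q₂ ∈ [0,1]`, and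
`μ_AB + μ_CD + 2μ_{o1o3} + 2μ_{o2o3} = μ_AC + μ_BD`, the ratio of expected
transformed distances is at least `((8/3)μ_L q₁ + 1)((8/3)μ_L q₂ + 1)`. -/
theorem four_point_ratio_bound {Ω : Type*} [MeasurableSpace Ω]
    (ℙ : Measure Ω) [IsProbabilityMeasure ℙ]
    (Z : Ω → ℝ) (hZ : Measurable Z) (hZnn : ∀ ω, 0 ≤ Z ω)
    (μAB μCD μ13 μ23 μAC μBD μL q1 q2 I : ℝ)
    (hAB : 0 ≤ μAB) (hCD : 0 ≤ μCD) (h13 : 0 ≤ μ13) (h23 : 0 ≤ μ23)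
    (hAC : 0 ≤ μAC) (hBD : 0 ≤ μBD)
    (hsum : μAB + μCD + 2 * μ13 + 2 * μ23 = μAC + μBD)
    (hμL : 0 < μL)
    (hI : I = ∫ ω, Real.exp (-(8 / 3) * Z ω) ∂ℙ)
    (hIle : I ≤ 1 / ((8 / 3) * μL + 1))
    (hq1 : q1 ∈ Set.Icc (0 : ℝ) 1) (hq2 : q2 ∈ Set.Icc (0 : ℝ) 1) :
    ((8 / 3) * μL * q1 + 1) * ((8 / 3) * μL * q2 + 1) ≤
      (Real.exp (-(4 / 3) * (μAB + 2 * μ13)) * (q1 + I * (1 - q1)) *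
        (Real.exp (-(4 / 3) * (μCD + 2 * μ23)) * (q2 + I * (1 - q2)))) /
      (Real.exp (-(4 / 3) * μAC) * I * (Real.exp (-(4 / 3) * μBD) * I)) :=
  four_point_ratio_bound_general ℙ Z hZ hZnn μAB μCD μ13 μ23 μAC μBD μL q1 q2 I hsum hI hIle hq1 hq2
end
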